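/- Let S̄ = ⟨S_i : i < ω₂⟩ be a sequence of stationary subsets of ω₁ with S_i ∩ S_j non-stationary for i ≠ j. Then I(S̄) = {H ⊆ ω₁ : the set {i < ω₂ : H ∩ S_i is stationary} has cardinality at most ℵ₁} is a normal ideal on ω₁: it is closed under subsets and under diagonal unions ∇_ξ H_ξ = {α < ω₁ : ∃ξ < α, α ∈ H_ξ}. -/

import Mathlib

open Set

/-- ω₁, the first uncountable ordinal. -/
noncomputable def omegaOne : Ordinal := (Cardinal.aleph 1).ord

/-- ω₂, the second uncountable ordinal. -/
noncomputable def omegaTwo : Ordinal := (Cardinal.aleph 2).ord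

/-- The set of countable ordinals, i.e. ω₁ viewed as a set of ordinals. -/
def omegaOneSet : Set Ordinal := {o | o < omegaOne}

/-- `A ⊆* B` iff `A \ B` is finite. -/
def AlmostSubset (A B : Set Ordinal) : Prop := (A \ B).Finite

/-- `A =* B` iff `A ⊆* B` and `B ⊆* A`. -/
def AlmostEq (A B : Set Ordinal) : Prop := AlmostSubset A B ∧ AlmostSubset B A

/-- A club subset of ω₁: a set of countable ordinals, unbounded in ω₁ and
closed (every nonzero δ < ω₁ which is a limit of members is a member). -/
def IsClub' (C : Set Ordinal) : Prop :=
  C ⊆ omegaOneSet ∧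
  (∀ a < omegaOne, ∃ b ∈ C, a < b) ∧
  (∀ δ, δ ≠ 0 → δ < omegaOne → (∀ a < δ, ∃ b ∈ C, a < b ∧ b < δ) → δ ∈ C)

/-- A stationary subset of ω₁: one meeting every club. -/
def Stationary (S : Set Ordinal) : Prop := ∀ C, IsClub' C → (S ∩ C).Nonempty

/-- A ladder system: for each δ in the domain (a set of countable limit ordinals),
a strictly increasing ω-sequence cofinal in δ. -/
structure Ladder where
  dom : Set Ordinal
  toFun : Ordinal → ℕ → Ordinal
  dom_lt : ∀ δ ∈ dom, δ < omegaOne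
  mono : ∀ δ ∈ dom, StrictMono (toFun δ)
  lt : ∀ δ ∈ dom, ∀ n, toFun δ n < δ
  cofinal : ∀ δ ∈ dom, ∀ a < δ, ∃ n, a < toFun δ n

/-- `[η_δ]`, the range of the ladder at δ. -/
def Ladder.lad (η : Ladder) (δ : Ordinal) : Set Ordinal := Set.range (η.toFun δ)

/-- The restriction `η̄↾A`, with domain `dom(η̄) ∩ A`. -/
def Ladder.restrict (η : Ladder) (A : Set Ordinal) : Ladder where
  dom := η.dom ∩ A
  toFun := η.toFun
  dom_lt := fun δ h => η.dom_lt δ h.1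
  mono := fun δ h => η.mono δ h.1
  lt := fun δ h => η.lt δ h.1
  cofinal := fun δ h => η.cofinal δ h.1

/-- η̄ is club-guessing iff every club C has some δ ∈ dom(η̄) with `[η_δ] ⊆* C`. -/
def ClubGuessing (η : Ladder) : Prop :=
  ∀ C, IsClub' C → ∃ δ ∈ η.dom, AlmostSubset (η.lad δ) C

/-- η̄ is strongly club-guessing iff for every club C there is a club D with
`[η_δ] ⊆* C` for all δ ∈ D ∩ dom(η̄). -/
def StronglyGuessing (η : Ladder) : Prop :=
  ∀ C, IsClub' C → ∃ D, IsClub' D ∧ ∀ δ ∈ D ∩ η.dom, AlmostSubset (η.lad δ) C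

/-- A club C avoids η̄ iff `[η_δ] ∩ C` is finite for every δ ∈ dom(η̄) outside
some non-stationary set. -/
def Avoids (C : Set Ordinal) (η : Ladder) : Prop :=
  IsClub' C ∧ ∃ N : Set Ordinal, ¬ Stationary N ∧
    ∀ δ ∈ η.dom, δ ∉ N → (η.lad δ ∩ C).Finite

/-- η̄ is avoidable iff some club avoids it. -/
def Avoidable (η : Ladder) : Prop := ∃ C, Avoids C η

/-- A set S ⊆ ω₁ is avoidable iff every ladder system over S is avoidable. -/
def AvoidableSet (S : Set Ordinal) : Prop := ∀ η : Ladder, η.dom ⊆ S → Avoidable η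

/-- Two ladders are almost disjoint iff for some club C, `[η_δ] ∩ [μ_δ]` is finite
for every δ ∈ C ∩ dom(η̄) ∩ dom(μ̄). -/
def AlmostDisjoint (η μ : Ladder) : Prop :=
  ∃ C, IsClub' C ∧ ∀ δ ∈ C ∩ (η.dom ∩ μ.dom), (η.lad δ ∩ μ.lad δ).Finite

/-- `η̄ ⊴ μ̄` : η̄ is a subladder of μ̄. -/
def Subladder (η μ : Ladder) : Prop :=
  ∃ C, IsClub' C ∧ C ∩ η.dom ⊆ μ.dom ∧
    ∀ δ ∈ C ∩ η.dom, AlmostSubset (η.lad δ) (μ.lad δ)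

/-- η̄ is maximal for X iff dom(η̄) ⊆ X, η̄ is strongly club-guessing, and every
ladder system over X almost disjoint from η̄ is avoidable. -/
def MaximalFor' (η : Ladder) (X : Set Ordinal) : Prop :=
  η.dom ⊆ X ∧ StronglyGuessing η ∧
    ∀ μ : Ladder, μ.dom ⊆ X → AlmostDisjoint μ η → Avoidable μ

/-- The diagonal union `∇_ξ A_ξ = {α < ω₁ : ∃ ξ < α, α ∈ A_ξ}`. -/
def diagUnion (A : Ordinal → Set Ordinal) : Set Ordinal :=
  {α | α < omegaOne ∧ ∃ ξ < α, α ∈ A ξ}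

/-- H is S̄-small iff the set of i < ω₂ with H ∩ S_i stationary has size ≤ ℵ₁. -/
def SSmall (S : Ordinal → Set Ordinal) (H : Set Ordinal) : Prop :=
  Cardinal.mk {i : Ordinal // i < omegaTwo ∧ Stationary (H ∩ S i)} ≤
    Cardinal.lift.{1,0} (Cardinal.aleph 1 : Cardinal.{0})

/-- Conditions A1–A5 for (S̄, η̄), with χ the family of maximal ladders from A3. -/
def CondA (S : Ordinal → Set Ordinal) (η : Ladder) (χ : Ordinal → Ladder) : Prop :=
  (∀ i < omegaTwo, S i ⊆ omegaOneSet ∧ Stationary (S i)) ∧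
  (∀ i < omegaTwo, ∀ j < omegaTwo, i ≠ j → ¬ Stationary (S i ∩ S j)) ∧
  -- A1
  (∀ i < omegaTwo, S i ⊆ η.dom) ∧
  -- A2
  (∀ μ : Ladder, AlmostDisjoint μ η → Avoidable μ) ∧
  -- A3
  (∀ i < omegaTwo, (χ i).dom = S i ∧ MaximalFor' (χ i) (S i)) ∧
  -- A4
  (∀ X : Set Ordinal, X ⊆ omegaOneSet →
      (∀ i < omegaTwo, ¬ Stationary (X ∩ S i)) → AvoidableSet X) ∧
  -- A5
  (∀ X : Set Ordinal, X ⊆ omegaOneSet → ¬ SSmall S X →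
      ∀ ρ : Ladder, ρ.dom = X → Subladder ρ η →
        ∃ i, i < omegaTwo ∧ S i ⊆ X ∧ Subladder (χ i) ρ)

section AuxStmt4
universe u

lemma omegaOne_isLimit' : Order.IsSuccLimit omegaOne.{u} :=
  Cardinal.isSuccLimit_ord (Cardinal.aleph0_le_aleph 1)

lemma omegaOne_cof' : Ordinal.cof omegaOne.{u} = Cardinal.aleph 1 :=
  Cardinal.isRegular_aleph_one.cof_eq

lemma lift_omegaOne' : Ordinal.lift.{u,0} omegaOne.{0} = omegaOne.{u} := by
  unfold omegaOne
  rw [Cardinal.lift_ord, Cardinal.lift_aleph, Ordinal.lift_one]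

lemma add_one_lt_omegaOne' {a : Ordinal.{u}} (h : a < omegaOne) : a + 1 < omegaOne := by
  rw [Ordinal.add_one_eq_succ]
  exact omegaOne_isLimit'.succ_lt h

lemma not_stationary_iff' {N : Set Ordinal.{u}} :
    ¬ Stationary N ↔ ∃ C, IsClub' C ∧ N ∩ C = ∅ := by
  unfold Stationary
  push_neg
  simp [Set.not_nonempty_iff_eq_empty]

lemma stationary_mono' {A B : Set Ordinal.{u}} (h : A ⊆ B) (hA : Stationary A) :
    Stationary B := fun C hC => ((hA C hC).imp fun _ hx => ⟨h hx.1, hx.2⟩)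

/-- The diagonal intersection of clubs is a club. -/
lemma diagInter_isClub' (C : Ordinal.{u} → Set Ordinal.{u})
    (hC : ∀ ξ < omegaOne, IsClub' (C ξ)) :
    IsClub' {α | α < omegaOne ∧ ∀ ξ < α, α ∈ C ξ} := by
  have key : ∀ β : Ordinal, ∃ γ, β < omegaOne →
      β < γ ∧ γ < omegaOne ∧ ∀ ξ < β, ∃ c ∈ C ξ, β < c ∧ c ≤ γ := by
    intro β
    by_cases hβ : β < omegaOne
    · have he : ∀ ξ : Ordinal, ∃ c, ξ < omegaOne → c ∈ C ξ ∧ β < c ∧ c < omegaOne := by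
        intro ξ
        by_cases hξ : ξ < omegaOne
        · obtain ⟨c, hc, hbc⟩ := (hC ξ hξ).2.1 β hβ
          exact ⟨c, fun _ => ⟨hc, hbc, (hC ξ hξ).1 hc⟩⟩
        · exact ⟨0, fun h => absurd h hξ⟩
      choose e he using he
      refine ⟨max (β + 1) (Ordinal.bsup β (fun ξ _ => e ξ)), fun _ => ⟨?_, ?_, ?_⟩⟩
      · exact lt_max_of_lt_left (by rw [Ordinal.add_one_eq_succ]; exact Order.lt_succ β)
      · refine max_lt (add_one_lt_omegaOne' hβ) (Ordinal.bsup_lt_ord ?_ ?_)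
        · rw [omegaOne_cof']
          exact Cardinal.lt_ord.1 hβ
        · exact fun ξ hξ => (he ξ (hξ.trans hβ)).2.2
      · intro ξ hξ
        exact ⟨e ξ, (he ξ (hξ.trans hβ)).1, (he ξ (hξ.trans hβ)).2.1,
          le_trans (Ordinal.le_bsup _ ξ hξ) (le_max_right _ _)⟩
    · exact ⟨0, fun h => absurd h hβ⟩
  choose g hg using key
  refine ⟨fun α hα => hα.1, ?_, ?_⟩
  · -- unbounded
    intro a ha
    set f : ℕ → Ordinal.{u} := fun n => g^[n] (a + 1) with hf
    have hfs : ∀ n, f (n + 1) = g (f n) := fun n => Function.iterate_succ_apply' g n _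
    have hlt : ∀ n, f n < omegaOne := by
      intro n
      induction n with
      | zero => exact add_one_lt_omegaOne' ha
      | succ n ih => rw [hfs]; exact (hg (f n) ih).2.1
    have hmono : StrictMono f := by
      apply strictMono_nat_of_lt_succ
      intro n
      rw [hfs]
      exact (hg (f n) (hlt n)).1
    set δ := ⨆ n, f n with hδ
    have hδω : δ < omegaOne := by
      rw [hδ]
      refine Ordinal.iSup_lt_ord_lift ?_ hlt
      rw [omegaOne_cof', Cardinal.mk_denumerable, Cardinal.lift_aleph0]
      exact Cardinal.aleph0_lt_aleph_one
    have hle : ∀ n, f n ≤ δ := fun n => Ordinal.le_iSup f n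
    have hltδ : ∀ n, f n < δ := fun n => lt_of_lt_of_le (hmono (Nat.lt_succ_self n)) (hle (n+1))
    have hf0 : f 0 = a + 1 := rfl
    have haδ : a < δ := lt_of_lt_of_le
      (by rw [hf0, Ordinal.add_one_eq_succ]; exact Order.lt_succ a) (hle 0)
    refine ⟨δ, ⟨hδω, ?_⟩, haδ⟩
    intro ξ hξδ
    have hξω : ξ < omegaOne := hξδ.trans hδω
    refine (hC ξ hξω).2.2 δ (pos_iff_ne_zero.1 ((zero_le (a := a)).trans_lt haδ)) hδω ?_
    intro b hbδ
    obtain ⟨n, hn⟩ := (Ordinal.lt_iSup_iff).1 hbδ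
    obtain ⟨m, hm⟩ := (Ordinal.lt_iSup_iff).1 hξδ
    set N := max n m with hN
    have hbN : b < f N := lt_of_lt_of_le hn (hmono.monotone (le_max_left n m))
    have hξN : ξ < f N := lt_of_lt_of_le hm (hmono.monotone (le_max_right n m))
    obtain ⟨c, hcC, hfc, hcle⟩ := (hg (f N) (hlt N)).2.2 ξ hξN
    refine ⟨c, hcC, hbN.trans hfc, lt_of_le_of_lt (hcle.trans ?_) (hltδ (N+1))⟩
    rw [hfs]
  · -- closed
    intro δ hδ0 hδω hlim
    refine ⟨hδω, fun ξ hξ => ?_⟩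
    refine (hC ξ (hξ.trans hδω)).2.2 δ hδ0 hδω ?_
    intro a ha
    obtain ⟨b, hbΔ, hab, hbδ⟩ := hlim (max a ξ) (max_lt ha hξ)
    exact ⟨b, hbΔ.2 ξ (lt_of_le_of_lt (le_max_right a ξ) hab),
      lt_of_le_of_lt (le_max_left a ξ) hab, hbδ⟩

end AuxStmt4

set_option maxHeartbeats 1000000 in
/-- For a sequence S̄ of pairwise almost disjoint stationary subsets of ω₁, the
collection I(S̄) of S̄-small sets is a normal ideal: closed under subsets and
under diagonal unions. -/

theorem stmt4 (S : Ordinal → Set Ordinal)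
    (hstat : ∀ i < omegaTwo, S i ⊆ omegaOneSet ∧ Stationary (S i))
    (hdisj : ∀ i < omegaTwo, ∀ j < omegaTwo, i ≠ j → ¬ Stationary (S i ∩ S j)) :
    (∀ H : Set Ordinal, H ⊆ omegaOneSet → ∀ H' ⊆ H, SSmall S H → SSmall S H') ∧
    (∀ H : Ordinal → Set Ordinal, (∀ ξ < omegaOne, H ξ ⊆ omegaOneSet) →
        (∀ ξ < omegaOne, SSmall S (H ξ)) → SSmall S (diagUnion H)) := by
  constructor
  · -- closed under subsets
    intro H _ H' hH' hsm
    refine le_trans (Cardinal.mk_le_mk_of_subset ?_) hsm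
    intro i hi
    exact ⟨hi.1, stationary_mono' (fun x hx => ⟨hH' hx.1, hx.2⟩) hi.2⟩
  · -- closed under diagonal unions
    intro H _ hsm
    have hsub : {i : Ordinal.{0} | i < omegaTwo ∧ Stationary (diagUnion H ∩ S i)} ⊆
        ⋃ ξ ∈ Set.Iio omegaOne.{0},
          {i : Ordinal.{0} | i < omegaTwo ∧ Stationary (H (Ordinal.lift ξ) ∩ S i)} := by
      intro i hi
      by_contra hnot
      have hns : ∀ ξ, ∃ C, ξ < omegaOne → IsClub' C ∧ (H ξ ∩ S i) ∩ C = ∅ := by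
        intro ξ
        by_cases hξ : ξ < omegaOne
        · obtain ⟨ξ₀, hξ₀, hlift⟩ := Ordinal.lt_lift_iff.1
            (by rw [lift_omegaOne']; exact hξ)
          obtain ⟨C, hC, hCe⟩ := not_stationary_iff'.1
            (fun hs => hnot (Set.mem_biUnion hξ₀ ⟨hi.1, by rw [hlift]; exact hs⟩))
          exact ⟨C, fun _ => ⟨hC, hCe⟩⟩
        · exact ⟨∅, fun h => absurd h hξ⟩
      choose Cl hCl using hns
      have hclub := diagInter_isClub' Cl (fun ξ h => (hCl ξ h).1)
      obtain ⟨α, hα⟩ := hi.2 _ hclub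
      obtain ⟨⟨⟨hαω, ξ, hξα, hαHξ⟩, hαS⟩, hαΔ⟩ := hα
      have hmem : α ∈ (H ξ ∩ S i) ∩ Cl ξ := ⟨⟨hαHξ, hαS⟩, hαΔ.2 ξ hξα⟩
      rw [(hCl ξ (hξα.trans hαω)).2] at hmem
      exact hmem
    have h1 : (Cardinal.mk ↥(Set.Iio omegaOne.{0}) : Cardinal.{1}) =
        Cardinal.lift.{1,0} (Cardinal.aleph 1) := by
      rw [Ordinal.mk_Iio_ordinal]
      simp [omegaOne, Cardinal.card_ord]
    have haleph0 : (Cardinal.aleph0 : Cardinal.{1}) ≤ Cardinal.lift.{1,0} (Cardinal.aleph 1) := by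
      rw [← Cardinal.lift_aleph0.{1,0}, Cardinal.lift_le]
      exact Cardinal.aleph0_lt_aleph_one.le
    calc Cardinal.mk {i : Ordinal.{0} // i < omegaTwo ∧ Stationary (diagUnion H ∩ S i)}
        ≤ Cardinal.mk ↥(⋃ ξ ∈ Set.Iio omegaOne.{0},
            {i : Ordinal.{0} | i < omegaTwo ∧ Stationary (H (Ordinal.lift ξ) ∩ S i)}) :=
          Cardinal.mk_le_mk_of_subset hsub
      _ ≤ Cardinal.mk ↥(Set.Iio omegaOne.{0}) * ⨆ ξ : ↥(Set.Iio omegaOne.{0}),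
            Cardinal.mk ↥{i : Ordinal.{0} | i < omegaTwo ∧ Stationary (H (Ordinal.lift ξ.1) ∩ S i)} :=
          Cardinal.mk_biUnion_le
            (fun ξ => {i : Ordinal.{0} | i < omegaTwo ∧ Stationary (H (Ordinal.lift ξ) ∩ S i)})
            (Set.Iio omegaOne.{0})
      _ ≤ Cardinal.lift.{1,0} (Cardinal.aleph 1) * Cardinal.lift.{1,0} (Cardinal.aleph 1) := by
          refine mul_le_mul' h1.le (ciSup_le' fun ξ => ?_)
          exact hsm (Ordinal.lift ξ.1) ((Ordinal.lift_lt.2 ξ.2).trans_eq lift_omegaOne')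
      _ = Cardinal.lift.{1,0} (Cardinal.aleph 1) := Cardinal.mul_eq_self haleph0
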